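/- For μ > 0 let e(μ) < 0 solve (μ/(2π)) ∫_T dq/(𝔢(q) - e(μ)) = 1. Then lim_{μ ↘ 0} e(μ)/μ^{4/3} = -2^{-4/3}. -/

import Mathlib

open Real

noncomputable def 𝔢 (q : ℝ) : ℝ := (1 - Real.cos q) ^ 2

/-- `∫_T dq/(𝔢(q) - z)`. -/
noncomputable def I (z : ℝ) : ℝ := ∫ q in (-π)..π, 1 / (𝔢 q - z)

/-- `Δ(μ; z) = 1 - (μ/(2π)) ∫_T dq/(𝔢(q) - z)`. -/
noncomputable def Δ (μ z : ℝ) : ℝ := 1 - μ / (2 * π) * I z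

/-!
Near `q = 0` we have `𝔢 q = q⁴/4 + O(q⁶)`, while away from `0` the integrand of `I (-a)` stays
bounded. Squeezing `I (-a)` between the model integrals `∫ dq / (c q⁴/4 + a)` with `c = 1 ± δ²`,
which are elementary and behave like `π c^(-1/4) a^(-3/4)`, gives `a^(3/4) I (-a) → π` as `a ↘ 0`.
The eigenvalue equation reads `I (e μ) = 2π/μ`; the crude bound `I z ≤ 2π/|z|` forces `e μ → 0`,
so `(-e μ)^(3/4) / μ → 1/2`, which is the claim raised to the power `4/3`.
-/

open Filter Topology Set

/-- A primitive of `4 / (u⁴ + 4)`, from `u⁴ + 4 = ((u + 1)² + 1)((u - 1)² + 1)`. -/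
noncomputable def quarticPrimitive (u : ℝ) : ℝ :=
  (log ((u + 1) ^ 2 + 1) - log ((u - 1) ^ 2 + 1)) / 4 + (arctan (u + 1) + arctan (u - 1)) / 2

lemma hasDerivAt_quarticPrimitive (u : ℝ) : HasDerivAt quarticPrimitive (4 / (u ^ 4 + 4)) u := by
  have hQ : HasDerivAt (fun u : ℝ => (u + 1) ^ 2 + 1) (2 * (u + 1)) u := by
    simpa using (((hasDerivAt_id u).add_const 1).pow 2).add_const 1
  have hP : HasDerivAt (fun u : ℝ => (u - 1) ^ 2 + 1) (2 * (u - 1)) u := by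
    simpa using (((hasDerivAt_id u).sub_const 1).pow 2).add_const 1
  have h := (((hQ.log (by positivity)).sub (hP.log (by positivity))).div_const 4).add
    ((((hasDerivAt_id' u).add_const 1).arctan.add
      ((hasDerivAt_id' u).sub_const 1).arctan).div_const 2)
  refine h.congr_deriv ?_
  rw [show u ^ 4 + 4 = ((u + 1) ^ 2 + 1) * ((u - 1) ^ 2 + 1) by ring]
  field_simp
  ring

lemma quarticPrimitive_zero : quarticPrimitive 0 = 0 := by
  norm_num [quarticPrimitive]

lemma tendsto_log_sub_log_atTop :
    Tendsto (fun u : ℝ => log ((u + 1) ^ 2 + 1) - log ((u - 1) ^ 2 + 1)) atTop (𝓝 0) := by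
  have hP : ∀ u : ℝ, 0 < (u - 1) ^ 2 + 1 := fun u => by positivity
  refine tendsto_of_tendsto_of_tendsto_of_le_of_le' tendsto_const_nhds
    (tendsto_const_nhds.div_atTop tendsto_id : Tendsto (fun u : ℝ => 8 / u) atTop (𝓝 0)) ?_ ?_
  · filter_upwards [eventually_ge_atTop 0] with u hu
    exact sub_nonneg.2 (log_le_log (hP u) (by nlinarith))
  · filter_upwards [eventually_gt_atTop 0] with u hu
    rw [← log_div (by positivity) (hP u).ne']
    calc log (((u + 1) ^ 2 + 1) / ((u - 1) ^ 2 + 1)) ≤ ((u + 1) ^ 2 + 1) / ((u - 1) ^ 2 + 1) - 1 :=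
          log_le_sub_one_of_pos (by positivity)
      _ ≤ 8 / u := by
          rw [div_sub_one (hP u).ne', div_le_div_iff₀ (hP u) hu]
          nlinarith [sq_nonneg (u - 2)]

lemma tendsto_quarticPrimitive_atTop : Tendsto quarticPrimitive atTop (𝓝 (π / 2)) := by
  have harctan : Tendsto arctan atTop (𝓝 (π / 2)) :=
    tendsto_nhds_of_tendsto_nhdsWithin tendsto_arctan_atTop
  have h := (tendsto_log_sub_log_atTop.div_const 4).add
    (((harctan.comp (tendsto_atTop_add_const_right _ 1 tendsto_id)).add
      (harctan.comp (tendsto_atTop_add_const_right _ (-1) tendsto_id))).div_const 2)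
  rw [show π / 2 = 0 / 4 + (π / 2 + π / 2) / 2 by ring]
  exact h.congr fun u => by simp [quarticPrimitive, sub_eq_add_neg]

section QuarticModel

variable {a c s : ℝ}

lemma continuous_one_div_quartic_add (hc : 0 ≤ c) (ha : 0 < a) :
    Continuous fun q : ℝ => 1 / (c * q ^ 4 / 4 + a) :=
  continuous_const.div (by fun_prop) fun q => by positivity

lemma integral_one_div_quartic_add (hc : 0 < c) (hs : 0 < s) (δ : ℝ) :
    ∫ q in 0..δ, 1 / (c * q ^ 4 / 4 + c * s ^ 4) = quarticPrimitive (δ / s) / (c * s ^ 3) := by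
  have hderiv : ∀ q : ℝ, HasDerivAt (fun q => quarticPrimitive (q / s) / (c * s ^ 3))
      (1 / (c * q ^ 4 / 4 + c * s ^ 4)) q := fun q => by
    refine (((hasDerivAt_quarticPrimitive (q / s)).comp q
      ((hasDerivAt_id q).div_const s)).div_const (c * s ^ 3)).congr_deriv ?_
    field_simp
  rw [intervalIntegral.integral_eq_sub_of_hasDerivAt (fun q _ => hderiv q)
    ((continuous_one_div_quartic_add hc.le (by positivity)).intervalIntegrable _ _)]
  simp [quarticPrimitive_zero]

lemma rpow_mul_integral_one_div_quartic_add (hc : 0 < c) (ha : 0 < a) (δ : ℝ) :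
    a ^ ((3 : ℝ) / 4) * (2 * ∫ q in 0..δ, 1 / (c * q ^ 4 / 4 + a)) =
      2 / c ^ ((1 : ℝ) / 4) * quarticPrimitive (δ / (a / c) ^ ((1 : ℝ) / 4)) := by
  set s := (a / c) ^ ((1 : ℝ) / 4)
  have hs : 0 < s := by positivity
  have hs4 : c * s ^ 4 = a := by
    rw [← rpow_natCast, ← rpow_mul (by positivity)]
    norm_num
    field_simp
  have ha34 : a ^ ((3 : ℝ) / 4) = c ^ ((3 : ℝ) / 4) * s ^ 3 := by
    rw [← hs4, mul_rpow hc.le (by positivity), ← rpow_natCast, ← rpow_mul hs.le]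
    norm_num
  have hc14 : c = c ^ ((3 : ℝ) / 4) * c ^ ((1 : ℝ) / 4) := by
    rw [← rpow_add hc]; norm_num
  rw [ha34, ← hs4, integral_one_div_quartic_add hc hs]
  field_simp
  linear_combination -quarticPrimitive (δ / s) * hc14

lemma tendsto_rpow_mul_integral_one_div_quartic_add (hc : 0 < c) {δ : ℝ} (hδ : 0 < δ) :
    Tendsto (fun a => a ^ ((3 : ℝ) / 4) * (2 * ∫ q in 0..δ, 1 / (c * q ^ 4 / 4 + a)))
      (𝓝[>] 0) (𝓝 (π / c ^ ((1 : ℝ) / 4))) := by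
  have hs : Tendsto (fun a : ℝ => (a / c) ^ ((1 : ℝ) / 4)) (𝓝[>] 0) (𝓝[>] 0) := by
    refine tendsto_nhdsWithin_of_tendsto_nhds_of_eventually_within _ ?_ ?_
    · have : Continuous fun a : ℝ => (a / c) ^ ((1 : ℝ) / 4) :=
        (continuous_id.div_const c).rpow_const fun _ => Or.inr (by norm_num)
      exact (this.tendsto' 0 0 (by simp)).mono_left nhdsWithin_le_nhds
    · filter_upwards [self_mem_nhdsWithin] with a (ha : 0 < a)
      exact mem_Ioi.2 (by positivity)
  have h := (tendsto_quarticPrimitive_atTop.comp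
    ((tendsto_inv_nhdsGT_zero.comp hs).const_mul_atTop hδ)).const_mul (2 / c ^ ((1 : ℝ) / 4))
  rw [show π / c ^ ((1 : ℝ) / 4) = 2 / c ^ ((1 : ℝ) / 4) * (π / 2) by ring]
  refine h.congr' ?_
  filter_upwards [self_mem_nhdsWithin] with a (ha : 0 < a)
  rw [rpow_mul_integral_one_div_quartic_add hc ha, div_eq_mul_inv δ]
  rfl

end QuarticModel

lemma continuous_𝔢 : Continuous 𝔢 := by unfold 𝔢; fun_prop

lemma 𝔢_nonneg (q : ℝ) : 0 ≤ 𝔢 q := sq_nonneg _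

lemma 𝔢_neg (q : ℝ) : 𝔢 (-q) = 𝔢 q := by simp [𝔢]

lemma monotoneOn_𝔢 : MonotoneOn 𝔢 (Icc 0 π) := fun x hx y hy hxy => by
  have := cos_le_cos_of_nonneg_of_le_pi hx.1 hy.2 hxy
  unfold 𝔢
  nlinarith [cos_le_one x, cos_le_one y]

lemma 𝔢_pos {x : ℝ} (hx : 0 < x) (hxπ : x ≤ π) : 0 < 𝔢 x := by
  have : cos x < 1 := by simpa using cos_lt_cos_of_nonneg_of_le_pi le_rfl hxπ hx
  unfold 𝔢
  nlinarith

lemma abs_𝔢_sub_le {q δ : ℝ} (hq : |q| ≤ δ) (hδ : δ ≤ 1) :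
    |𝔢 q - q ^ 4 / 4| ≤ δ ^ 2 * q ^ 4 / 4 := by
  have hcos := cos_bound (hq.trans hδ)
  have hq2 : q ^ 2 ≤ δ ^ 2 := by simpa using sq_le_sq' (abs_le.1 hq).1 (abs_le.1 hq).2
  have hδ2 : δ ^ 2 ≤ 1 := by nlinarith [abs_nonneg q]
  have hfactor : 𝔢 q - q ^ 4 / 4 = (1 - cos q - q ^ 2 / 2) * (1 - cos q + q ^ 2 / 2) := by
    unfold 𝔢; ring
  have hq4 : |q| ^ 4 = q ^ 4 := by rw [pow_abs, abs_of_nonneg (by positivity)]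
  have h1 : |1 - cos q - q ^ 2 / 2| ≤ 5 / 96 * q ^ 4 := by
    rw [← abs_neg, show -(1 - cos q - q ^ 2 / 2) = cos q - (1 - q ^ 2 / 2) by ring]
    linarith
  have h2 : |1 - cos q + q ^ 2 / 2| ≤ 101 / 96 * q ^ 2 := by
    calc |1 - cos q + q ^ 2 / 2| = |(1 - cos q - q ^ 2 / 2) + q ^ 2| := by ring_nf
      _ ≤ 5 / 96 * q ^ 4 + q ^ 2 :=
          (abs_add_le _ _).trans (by rw [abs_of_nonneg (sq_nonneg q)]; linarith)
      _ ≤ 101 / 96 * q ^ 2 := by nlinarith [sq_nonneg q]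
  rw [hfactor, abs_mul]
  calc |1 - cos q - q ^ 2 / 2| * |1 - cos q + q ^ 2 / 2| ≤ 5 / 96 * q ^ 4 * (101 / 96 * q ^ 2) :=
        mul_le_mul h1 h2 (abs_nonneg _) (by positivity)
    _ ≤ δ ^ 2 * q ^ 4 / 4 := by nlinarith [pow_nonneg (sq_nonneg q) 2]

section Integrals

variable {a δ : ℝ}

lemma continuous_one_div_𝔢_add (ha : 0 < a) : Continuous fun q => 1 / (𝔢 q + a) :=
  continuous_const.div (continuous_𝔢.add continuous_const) fun q => by
    linarith [𝔢_nonneg q]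

lemma I_neg_eq_two_mul_integral (ha : 0 < a) : I (-a) = 2 * ∫ q in 0..π, 1 / (𝔢 q + a) := by
  have hint : ∀ x y : ℝ, IntervalIntegrable (fun q => 1 / (𝔢 q + a)) MeasureTheory.volume x y :=
    fun x y => (continuous_one_div_𝔢_add ha).intervalIntegrable x y
  have hsymm : ∫ q in (-π)..0, 1 / (𝔢 q + a) = ∫ q in 0..π, 1 / (𝔢 q + a) := by
    simpa [𝔢_neg] using (intervalIntegral.integral_comp_neg (a := 0) (b := π)
      (fun q => 1 / (𝔢 q + a))).symm
  simp only [I, sub_neg_eq_add]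
  rw [← intervalIntegral.integral_add_adjacent_intervals (hint _ 0) (hint 0 _), hsymm, two_mul]

lemma I_le_of_neg {z : ℝ} (hz : z < 0) : I z ≤ 2 * π / -z := by
  have hint : IntervalIntegrable (fun q => 1 / (𝔢 q - z)) MeasureTheory.volume (-π) π := by
    simpa [sub_eq_add_neg] using (continuous_one_div_𝔢_add (neg_pos.2 hz)).intervalIntegrable
      (μ := MeasureTheory.volume) (-π) π
  calc I z ≤ ∫ _ in (-π)..π, 1 / -z := by
        refine intervalIntegral.integral_mono_on (by linarith [pi_pos]) hint
          intervalIntegrable_const fun q _ => ?_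
        exact one_div_le_one_div_of_le (neg_pos.2 hz) (by linarith [𝔢_nonneg q])
    _ = 2 * π / -z := by simp; ring

lemma two_mul_integral_le_I_neg (hδ : 0 < δ) (hδ1 : δ ≤ 1) (ha : 0 < a) :
    2 * ∫ q in 0..δ, 1 / ((1 + δ ^ 2) * q ^ 4 / 4 + a) ≤ I (-a) := by
  have hf := continuous_one_div_𝔢_add ha
  have hmodel : ∫ q in 0..δ, 1 / ((1 + δ ^ 2) * q ^ 4 / 4 + a) ≤ ∫ q in 0..δ, 1 / (𝔢 q + a) := by
    refine intervalIntegral.integral_mono_on hδ.le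
      ((continuous_one_div_quartic_add (by positivity) ha).intervalIntegrable _ _)
      (hf.intervalIntegrable _ _) fun q hq => ?_
    have := (abs_le.1 (abs_𝔢_sub_le ((abs_of_nonneg hq.1).trans_le hq.2) hδ1)).2
    exact one_div_le_one_div_of_le (by linarith [𝔢_nonneg q]) (by linarith)
  have hδπ : ∫ q in 0..δ, 1 / (𝔢 q + a) ≤ ∫ q in 0..π, 1 / (𝔢 q + a) :=
    intervalIntegral.integral_mono_interval le_rfl hδ.le (by linarith [pi_gt_three])
      (Eventually.of_forall fun q => (one_div_pos.2 (by linarith [𝔢_nonneg q])).le)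
      (hf.intervalIntegrable _ _)
  rw [I_neg_eq_two_mul_integral ha]
  linarith

lemma integral_one_div_𝔢_add_le (hδ : 0 < δ) (hδπ : δ ≤ π) (ha : 0 < a) :
    ∫ q in δ..π, 1 / (𝔢 q + a) ≤ π / 𝔢 δ := by
  have hδ' := 𝔢_pos hδ hδπ
  calc ∫ q in δ..π, 1 / (𝔢 q + a) ≤ ∫ _ in δ..π, 1 / 𝔢 δ := by
        refine intervalIntegral.integral_mono_on hδπ
          ((continuous_one_div_𝔢_add ha).intervalIntegrable _ _) intervalIntegrable_const
          fun q hq => one_div_le_one_div_of_le hδ' ?_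
        linarith [monotoneOn_𝔢 ⟨hδ.le, hδπ⟩ ⟨hδ.le.trans hq.1, hq.2⟩ hq.1]
    _ ≤ π / 𝔢 δ := by
        rw [intervalIntegral.integral_const, smul_eq_mul, ← div_eq_mul_one_div]
        gcongr
        linarith

lemma I_neg_le (hδ : 0 < δ) (hδ1 : δ ≤ 1) (ha : 0 < a) :
    I (-a) ≤ 2 * (∫ q in 0..δ, 1 / ((1 - δ ^ 2) * q ^ 4 / 4 + a)) + 2 * π / 𝔢 δ := by
  have hδπ : δ ≤ π := by linarith [pi_gt_three]
  have hδ2 : 0 ≤ 1 - δ ^ 2 := by nlinarith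
  have hf := continuous_one_div_𝔢_add ha
  have hmodel : ∫ q in 0..δ, 1 / (𝔢 q + a) ≤ ∫ q in 0..δ, 1 / ((1 - δ ^ 2) * q ^ 4 / 4 + a) := by
    refine intervalIntegral.integral_mono_on hδ.le (hf.intervalIntegrable _ _)
      ((continuous_one_div_quartic_add hδ2 ha).intervalIntegrable _ _) fun q hq => ?_
    have := (abs_le.1 (abs_𝔢_sub_le ((abs_of_nonneg hq.1).trans_le hq.2) hδ1)).1
    exact one_div_le_one_div_of_le (by positivity) (by linarith)
  have hsplit : ∫ q in 0..π, 1 / (𝔢 q + a) =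
      (∫ q in 0..δ, 1 / (𝔢 q + a)) + ∫ q in δ..π, 1 / (𝔢 q + a) :=
    (intervalIntegral.integral_add_adjacent_intervals (hf.intervalIntegrable _ _)
      (hf.intervalIntegrable _ _)).symm
  rw [I_neg_eq_two_mul_integral ha, hsplit, mul_div_assoc]
  linarith [integral_one_div_𝔢_add_le hδ hδπ ha]

end Integrals

lemma tendsto_rpow_mul_I_neg : Tendsto (fun a => a ^ ((3 : ℝ) / 4) * I (-a)) (𝓝[>] 0) (𝓝 π) := by
  have hsmall : ∀ᶠ δ in 𝓝[>] (0 : ℝ), δ ∈ Ioo 0 1 := Ioo_mem_nhdsGT one_pos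
  have hrpow : Tendsto (fun a : ℝ => a ^ ((3 : ℝ) / 4)) (𝓝[>] 0) (𝓝 0) :=
    ((continuous_id.rpow_const fun _ => Or.inr (by norm_num)).tendsto' 0 0
      (by simp)).mono_left nhdsWithin_le_nhds
  rw [tendsto_order]
  refine ⟨fun b hb => ?_, fun b hb => ?_⟩
  · have hcont : ContinuousAt (fun δ : ℝ => π / (1 + δ ^ 2) ^ ((1 : ℝ) / 4)) 0 := by
      fun_prop (disch := norm_num)
    obtain ⟨δ, ⟨hδ, hδ1⟩, hbδ⟩ := (hsmall.and ((hcont.tendsto.mono_left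
      nhdsWithin_le_nhds).eventually (lt_mem_nhds (by simpa using hb)))).exists
    filter_upwards [(tendsto_rpow_mul_integral_one_div_quartic_add (by positivity) hδ).eventually
      (lt_mem_nhds hbδ), self_mem_nhdsWithin] with a hba (ha : 0 < a)
    exact hba.trans_le (mul_le_mul_of_nonneg_left (two_mul_integral_le_I_neg hδ hδ1.le ha)
      (by positivity))
  · have hcont : ContinuousAt (fun δ : ℝ => π / (1 - δ ^ 2) ^ ((1 : ℝ) / 4)) 0 := by
      fun_prop (disch := norm_num)
    obtain ⟨δ, ⟨hδ, hδ1⟩, hbδ⟩ := (hsmall.and ((hcont.tendsto.mono_left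
      nhdsWithin_le_nhds).eventually (gt_mem_nhds (by simpa using hb)))).exists
    have hupper := (tendsto_rpow_mul_integral_one_div_quartic_add (c := 1 - δ ^ 2)
      (by nlinarith) hδ).add (hrpow.mul_const (2 * π / 𝔢 δ))
    rw [zero_mul, add_zero] at hupper
    filter_upwards [hupper.eventually (gt_mem_nhds hbδ), self_mem_nhdsWithin]
      with a hab (ha : 0 < a)
    rw [← mul_add] at hab
    exact (mul_le_mul_of_nonneg_left (I_neg_le hδ hδ1.le ha) (by positivity)).trans_lt hab

lemma tendsto_nhdsGT_zero_of_le_self {f : ℝ → ℝ} (hf : ∀ x > 0, 0 < f x ∧ f x ≤ x) :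
    Tendsto f (𝓝[>] 0) (𝓝[>] 0) := by
  refine tendsto_nhdsWithin_of_tendsto_nhds_of_eventually_within _ ?_ ?_
  · refine tendsto_of_tendsto_of_tendsto_of_le_of_le' tendsto_const_nhds
      (tendsto_id.mono_left nhdsWithin_le_nhds) ?_ ?_ <;>
    filter_upwards [self_mem_nhdsWithin] with x (hx : 0 < x)
    exacts [(hf x hx).1.le, (hf x hx).2]
  · filter_upwards [self_mem_nhdsWithin] with x (hx : 0 < x) using (hf x hx).1

theorem e_asymptotic_at_zero_pos (e : ℝ → ℝ)
    (he : ∀ μ > (0 : ℝ), e μ < 0 ∧ μ / (2 * π) * I (e μ) = 1) :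
    Filter.Tendsto (fun μ => e μ / μ ^ ((4 : ℝ) / 3))
      (nhdsWithin 0 (Set.Ioi 0)) (nhds (-(1 / 2 ^ ((4 : ℝ) / 3)))) := by
  have hI : ∀ μ > 0, I (e μ) = 2 * π / μ := fun μ hμ => by
    have := (he μ hμ).2
    field_simp at this
    rw [eq_div_iff hμ.ne']
    linarith
  have hbound : ∀ μ > 0, 0 < -e μ ∧ -e μ ≤ μ := fun μ hμ => by
    have hneg := neg_pos.2 (he μ hμ).1
    have := I_le_of_neg (he μ hμ).1
    rw [hI μ hμ, div_le_div_iff_of_pos_left (by positivity) hμ hneg] at this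
    exact ⟨hneg, this⟩
  have h := (tendsto_rpow_mul_I_neg.comp (tendsto_nhdsGT_zero_of_le_self hbound)).div_const (2 * π)
    |>.rpow_const (p := (4 : ℝ) / 3) (Or.inr (by norm_num)) |>.neg
  convert h.congr' ?_ using 2
  · rw [div_mul_cancel_right₀ pi_ne_zero, one_div, inv_rpow zero_le_two]
  filter_upwards [self_mem_nhdsWithin] with μ (hμ : 0 < μ)
  have hneg := (hbound μ hμ).1
  simp only [Function.comp_apply, neg_neg, hI μ hμ]
  rw [show (-e μ) ^ ((3 : ℝ) / 4) * (2 * π / μ) / (2 * π) = (-e μ) ^ ((3 : ℝ) / 4) / μ by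
      field_simp, div_rpow (by positivity) hμ.le, ← rpow_mul hneg.le]
  norm_num
  ring
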